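/- arXiv:2406.11024 — 8 statements merged into one kernel-verified Lean document; each statement's English description precedes it below -/
import Mathlib

section
/- Let V(y,M) = λ(y−2μ(1−y)(1−δ)θ)/(y+2(1−y)(1−δ)) + (1/β)·(λμ(1−y)(1−δ)θ/(y+2(1−y)(1−δ)))². Under the assumption λμθ < 2β, V(0,M) = λμθ(λμθ−4β)/(4β) < 0 and V(1,M) = λ > 0, and V(·,M) is continuous and strictly increasing on [0,1]; hence there is a unique ŷ_M ∈ (0,1) with V(ŷ_M,M) = 0. -/
/-!
Write `c = 2(1-δ) > 0` and `s(y) = c(1-y)/(y + c(1-y))`. On `[0,1]` the map `s` is continuous,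
strictly decreasing, and maps `[0,1]` into itself, and `V = g ∘ s` for the quadratic
`g(u) = λ - λ(1+μθ)u + (λμθ)²/(4β) u²`. Since `λμθ < 2β`, the vertex of `g` lies beyond `1`,
so `g` is strictly decreasing on `[0,1]` and `V` is strictly increasing. The endpoint values
have opposite signs, and the intermediate value theorem gives the unique zero.
-/

open Set

lemma strictAntiOn_quadratic_Icc (c : ℝ) {a k : ℝ} (hk : 0 ≤ k) (hka : 2 * k < a) :
    StrictAntiOn (fun u : ℝ => c - a * u + k * u ^ 2) (Icc 0 1) := by
  intro u hu v hv huv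
  have hslope : k * (u + v) < a := by nlinarith [hu.1, hv.2]
  nlinarith [mul_pos (sub_pos.2 huv) (sub_pos.2 hslope)]

noncomputable def weightedComplementShare (c y : ℝ) : ℝ := c * (1 - y) / (y + c * (1 - y))

section WeightedComplementShare

variable {c : ℝ}

lemma weightedComplementShare_denom_pos (hc : 0 < c) {y : ℝ} (hy : y ∈ Icc 0 1) :
    0 < y + c * (1 - y) := by
  rcases hy.1.eq_or_lt with rfl | hy0
  · simpa using hc
  · nlinarith [hy.2]

lemma continuousOn_weightedComplementShare (hc : 0 < c) :
    ContinuousOn (weightedComplementShare c) (Icc 0 1) :=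
  ContinuousOn.div (by fun_prop) (by fun_prop) fun _ hy =>
    (weightedComplementShare_denom_pos hc hy).ne'

lemma mapsTo_weightedComplementShare (hc : 0 < c) :
    MapsTo (weightedComplementShare c) (Icc 0 1) (Icc 0 1) := by
  intro y hy
  have hD := weightedComplementShare_denom_pos hc hy
  exact ⟨div_nonneg (by nlinarith [hy.2]) hD.le, (div_le_one hD).2 (by linarith [hy.1])⟩

lemma strictAntiOn_weightedComplementShare (hc : 0 < c) :
    StrictAntiOn (weightedComplementShare c) (Icc 0 1) := by
  intro a ha b hb hab
  rw [weightedComplementShare, weightedComplementShare,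
    div_lt_div_iff₀ (weightedComplementShare_denom_pos hc hb)
      (weightedComplementShare_denom_pos hc ha)]
  nlinarith

end WeightedComplementShare

lemma existsUnique_zero_of_strictMonoOn_Icc {f : ℝ → ℝ} {a b : ℝ} (hab : a ≤ b)
    (hf : ContinuousOn f (Icc a b)) (hmono : StrictMonoOn f (Icc a b))
    (ha : f a < 0) (hb : 0 < f b) :
    ∃! x, x ∈ Ioo a b ∧ f x = 0 := by
  obtain ⟨x, hx, hfx⟩ := intermediate_value_Ioo hab hf ⟨ha, hb⟩
  refine ⟨x, ⟨hx, hfx⟩, fun z ⟨hz, hfz⟩ => ?_⟩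
  exact hmono.injOn (Ioo_subset_Icc_self hz) (Ioo_subset_Icc_self hx) (hfz.trans hfx.symm)

theorem stmt_5 (lam mu th beta del : ℝ)
    (hlam : lam ∈ Set.Ioo (0:ℝ) 1) (hmu : 0 < mu) (hth : 0 < th) (hbeta : 0 < beta)
    (hdel : del ∈ Set.Ioo (1/2 : ℝ) 1) (hcost : lam*mu*th < 2*beta)
    (V : ℝ → ℝ)
    (hV : ∀ y, V y = lam*(y - 2*mu*(1-y)*(1-del)*th)/(y+2*(1-y)*(1-del))
        + (1/beta)*(lam*mu*(1-y)*(1-del)*th/(y+2*(1-y)*(1-del)))^2) :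
    V 0 = lam*mu*th*(lam*mu*th - 4*beta)/(4*beta) ∧ V 0 < 0 ∧ V 1 = lam ∧ 0 < V 1 ∧
    ContinuousOn V (Set.Icc (0:ℝ) 1) ∧ StrictMonoOn V (Set.Icc (0:ℝ) 1) ∧
    ∃! yhat : ℝ, yhat ∈ Set.Ioo (0:ℝ) 1 ∧ V yhat = 0 := by
  obtain ⟨hlam, -⟩ := hlam
  have hc : 0 < 2 * (1 - del) := by linarith [hdel.2]
  have hP : 0 < lam * mu * th := by positivity
  set g : ℝ → ℝ := fun u => lam - lam * (1 + mu * th) * u + (lam * mu * th) ^ 2 / (4 * beta) * u ^ 2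
  have hV_eq : EqOn V (g ∘ weightedComplementShare (2 * (1 - del))) (Icc 0 1) := by
    intro y hy
    have hD : 0 < y + 2 * (1 - y) * (1 - del) := by
      linarith [weightedComplementShare_denom_pos hc hy]
    simp only [Function.comp, g, weightedComplementShare, hV]
    field_simp
    ring
  have hg : StrictAntiOn g (Icc 0 1) := by
    refine strictAntiOn_quadratic_Icc _ (by positivity) ?_
    rw [← sub_pos]
    field_simp
    nlinarith
  have hV0 : V 0 = lam * mu * th * (lam * mu * th - 4 * beta) / (4 * beta) := by
    rw [hV]
    field_simp [hc.ne']
    ring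
  have hV1 : V 1 = lam := by simp [hV]
  have hV0neg : V 0 < 0 := hV0 ▸ div_neg_of_neg_of_pos (by nlinarith) (by positivity)
  have hmono : StrictMonoOn V (Icc 0 1) :=
    (hg.comp (strictAntiOn_weightedComplementShare hc) (mapsTo_weightedComplementShare hc)).congr
      hV_eq.symm
  have hcont : ContinuousOn V (Icc 0 1) :=
    ((by fun_prop : Continuous g).comp_continuousOn
      (continuousOn_weightedComplementShare hc)).congr hV_eq
  exact ⟨hV0, hV0neg, hV1, hV1 ▸ hlam, hcont, hmono,
    existsUnique_zero_of_strictMonoOn_Icc zero_le_one hcont hmono hV0neg (hV1 ▸ hlam)⟩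
end

section
/- Let V(y,I) = (y + 2(1−y)δθ((1−λ)−λμ))/(y+2(1−y)δ) + (1/β)·((1−y)δθ(λμ−(1−λ))/(y+2(1−y)δ))². Under the assumptions μ > (1−λ)/λ and μθ < 2β, V(0,I) < 0 and V(1,I) = 1 > 0, and V(·,I) is strictly increasing on [0,1]; hence there is a unique ŷ_I ∈ (0,1) with V(ŷ_I,I) = 0. -/
/-!
With `a = θ(λμ − (1 − λ)) > 0` and `s(y) = (1 − y)δ / (y + 2(1 − y)δ)`, one has
`V(y) = 1 − 2(1 + a) s + (a²/β) s²`. The map `s` decreases strictly from `1/2` to `0` on `[0, 1]`,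
and `μθ < 2β` gives `a² / β < 2(1 + a)`, so the quadratic decreases strictly on `[0, 1/2]`;
hence `V` increases strictly. Since `V(0) = a(a − 4β)/(4β) < 0 < 1 = V(1)`, the intermediate
value theorem gives the unique root.
-/

open Set

lemma strictAntiOn_quadratic {b k : ℝ} (hk₀ : 0 ≤ k) (hkb : k < b) (c : ℝ) :
    StrictAntiOn (fun s : ℝ => c - b * s + k * s ^ 2) (Icc 0 (1 / 2)) := by
  rintro r ⟨hr₀, -⟩ s ⟨-, hs⟩ hrs
  have hsum : k * (s + r) ≤ k := mul_le_of_le_one_right hk₀ (by linarith)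
  nlinarith [mul_lt_mul_of_pos_right hkb (sub_pos.mpr hrs)]

lemma existsUnique_zero_of_strictMonoOn {f : ℝ → ℝ} {a b : ℝ} (hab : a ≤ b)
    (hcont : ContinuousOn f (Icc a b)) (hmono : StrictMonoOn f (Icc a b))
    (ha : f a < 0) (hb : 0 < f b) :
    ∃! x, x ∈ Ioo a b ∧ f x = 0 := by
  obtain ⟨x, hx, hfx⟩ := intermediate_value_Ioo hab hcont ⟨ha, hb⟩
  refine ⟨x, ⟨hx, hfx⟩, fun z ⟨hz, hfz⟩ => ?_⟩
  exact hmono.injOn (Ioo_subset_Icc_self hz) (Ioo_subset_Icc_self hx) (hfz.trans hfx.symm)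

section Share

variable {del : ℝ}

noncomputable def share (del y : ℝ) : ℝ := (1 - y) * del / (y + 2 * (1 - y) * del)

lemma share_denom_pos (hdel : 0 < del) {y : ℝ} (hy : y ∈ Icc (0 : ℝ) 1) :
    0 < y + 2 * (1 - y) * del := by
  obtain ⟨hy₀, hy₁⟩ := hy
  rcases le_total del (1 / 2) with h | h <;> nlinarith

lemma continuousOn_share (hdel : 0 < del) : ContinuousOn (share del) (Icc 0 1) :=
  ContinuousOn.div (by fun_prop) (by fun_prop) fun _ hy => (share_denom_pos hdel hy).ne'

lemma share_mem_Icc (hdel : 0 < del) {y : ℝ} (hy : y ∈ Icc (0 : ℝ) 1) :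
    share del y ∈ Icc (0 : ℝ) (1 / 2) := by
  have hD := share_denom_pos hdel hy
  obtain ⟨hy₀, hy₁⟩ := hy
  constructor
  · exact div_nonneg (mul_nonneg (by linarith) hdel.le) hD.le
  · rw [share, div_le_iff₀ hD]
    linarith

lemma share_sub_share {x y : ℝ} (hx : x + 2 * (1 - x) * del ≠ 0)
    (hy : y + 2 * (1 - y) * del ≠ 0) :
    share del x - share del y
      = del * (y - x) / ((x + 2 * (1 - x) * del) * (y + 2 * (1 - y) * del)) := by
  rw [share, share, div_sub_div _ _ hx hy]
  ring

lemma strictAntiOn_share (hdel : 0 < del) : StrictAntiOn (share del) (Icc 0 1) := by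
  intro x hx y hy hxy
  have hDx := share_denom_pos hdel hx
  have hDy := share_denom_pos hdel hy
  rw [← sub_pos, share_sub_share hDx.ne' hDy.ne']
  exact div_pos (mul_pos hdel (sub_pos.mpr hxy)) (mul_pos hDx hDy)

lemma eq_quadratic_share {th beta c y : ℝ} (hD : y + 2 * (1 - y) * del ≠ 0) :
    (y + 2 * (1 - y) * del * th * (-c)) / (y + 2 * (1 - y) * del)
        + (1 / beta) * ((1 - y) * del * th * c / (y + 2 * (1 - y) * del)) ^ 2
      = 1 - 2 * (1 + th * c) * share del y + ((th * c) ^ 2 / beta) * share del y ^ 2 := by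
  rw [share]
  field_simp
  ring

end Share

theorem stmt_6_general (lam mu th beta del : ℝ)
    (hlam : lam ∈ Set.Ioo (0:ℝ) 1) (hth : 0 < th) (hbeta : 0 < beta)
    (hdel : del ∈ Set.Ioo (1/2 : ℝ) 1)
    (hweight : mu > (1-lam)/lam) (hcost : mu*th < 2*beta)
    (V : ℝ → ℝ)
    (hV : ∀ y, V y = (y + 2*(1-y)*del*th*((1-lam)-lam*mu))/(y+2*(1-y)*del)
        + (1/beta)*((1-y)*del*th*(lam*mu-(1-lam))/(y+2*(1-y)*del))^2) :
    V 0 < 0 ∧ V 1 = 1 ∧ (0:ℝ) < 1 ∧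
    StrictMonoOn V (Set.Icc (0:ℝ) 1) ∧
    ∃! yhat : ℝ, yhat ∈ Set.Ioo (0:ℝ) 1 ∧ V yhat = 0 := by
  obtain ⟨hlam₀, hlam₁⟩ := hlam
  have hdel₀ : 0 < del := by linarith [hdel.1]
  set c := lam * mu - (1 - lam)
  have hc : 0 < c := by nlinarith [(div_lt_iff₀ hlam₀).mp hweight]
  have ha : 0 < th * c := mul_pos hth hc
  have ha_lt : th * c < 2 * beta := by nlinarith
  set q : ℝ → ℝ := fun s => 1 - 2 * (1 + th * c) * s + ((th * c) ^ 2 / beta) * s ^ 2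
  have hq : EqOn V (q ∘ share del) (Icc 0 1) := fun y hy => by
    have h := eq_quadratic_share (th := th) (beta := beta) (c := c) (share_denom_pos hdel₀ hy).ne'
    rw [neg_sub] at h
    exact (hV y).trans h
  have hV0 : V 0 < 0 := by
    have hshare : share del 0 = 1 / 2 := by
      rw [share]
      field_simp
      ring
    have hsmall : (th * c) ^ 2 / beta < 4 * (th * c) := by
      rw [div_lt_iff₀ hbeta]
      nlinarith
    rw [hq (by simp), Function.comp_apply, hshare]
    simp only [q]
    linarith
  have hV1 : V 1 = 1 := by simp [hV]
  have hk : (th * c) ^ 2 / beta < 2 * (1 + th * c) := by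
    rw [div_lt_iff₀ hbeta]
    nlinarith
  have hmono : StrictMonoOn V (Icc 0 1) :=
    ((strictAntiOn_quadratic (by positivity) hk 1).comp (strictAntiOn_share hdel₀)
      fun _ hy => share_mem_Icc hdel₀ hy).congr hq.symm
  have hcont : ContinuousOn V (Icc 0 1) :=
    ((show Continuous q by fun_prop).comp_continuousOn (continuousOn_share hdel₀)).congr hq
  exact ⟨hV0, hV1, zero_lt_one, hmono,
    existsUnique_zero_of_strictMonoOn zero_le_one hcont hmono hV0 (by rw [hV1]; exact one_pos)⟩

theorem stmt_6 (lam mu th beta del : ℝ)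
    (hlam : lam ∈ Set.Ioo (0:ℝ) 1) (hmu : 0 < mu) (hth : 0 < th) (hbeta : 0 < beta)
    (hdel : del ∈ Set.Ioo (1/2 : ℝ) 1)
    (hweight : mu > (1-lam)/lam) (hcost : mu*th < 2*beta)
    (V : ℝ → ℝ)
    (hV : ∀ y, V y = (y + 2*(1-y)*del*th*((1-lam)-lam*mu))/(y+2*(1-y)*del)
        + (1/beta)*((1-y)*del*th*(lam*mu-(1-lam))/(y+2*(1-y)*del))^2) :
    V 0 < 0 ∧ V 1 = 1 ∧ (0:ℝ) < 1 ∧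
    StrictMonoOn V (Set.Icc (0:ℝ) 1) ∧
    ∃! yhat : ℝ, yhat ∈ Set.Ioo (0:ℝ) 1 ∧ V yhat = 0 :=
  stmt_6_general lam mu th beta del hlam hth hbeta hdel hweight hcost V hV
end

section
/- If g : [0,1] → ℝ is three times continuously differentiable with g(0) > 0, g(1) < 0, and g'''(y) > 0 for all y ∈ [0,1], then g has exactly one root in [0,1]. -/
/-!
Two roots `x < y` of `g` together with `g 0 > 0 > g 1` force, by the mean value theorem, a point
`p < x` with `g' p < 0`, a point `c ∈ (x, y)` with `g' c = 0` and a point `q > y` with `g' q < 0`.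
This is impossible when `g'` is convex, which is what `g''' > 0` guarantees.
-/

open Set

theorem hasDerivAt_iteratedDerivWithin_Icc {f : ℝ → ℝ} {a b x : ℝ} {k : WithTop ℕ∞} {n : ℕ}
    (hf : ContDiffOn ℝ k f (Icc a b)) (hn : n < k) (hx : x ∈ Ioo a b) :
    HasDerivAt (iteratedDerivWithin n f (Icc a b))
      (iteratedDerivWithin (n + 1) f (Icc a b) x) x := by
  have hab : a < b := hx.1.trans hx.2
  have hdiff := hf.differentiableOn_iteratedDerivWithin hn (uniqueDiffOn_Icc hab) x
    (Ioo_subset_Icc_self hx)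
  rw [iteratedDerivWithin_succ]
  exact hdiff.hasDerivWithinAt.hasDerivAt (Icc_mem_nhds hx.1 hx.2)

theorem eq_of_map_eq_zero_of_convexOn_deriv {f f' : ℝ → ℝ} {a b x y : ℝ}
    (hf : ContinuousOn f (Icc a b)) (hderiv : ∀ z ∈ Ioo a b, HasDerivAt f (f' z) z)
    (hconv : ConvexOn ℝ (Ioo a b) f') (ha : 0 < f a) (hb : f b < 0)
    (hx : x ∈ Icc a b) (hy : y ∈ Icc a b) (hfx : f x = 0) (hfy : f y = 0) : x = y := by
  wlog hxy : x ≤ y generalizing x y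
  · exact (this hy hx hfy hfx (le_of_not_ge hxy)).symm
  refine hxy.eq_or_lt.resolve_right fun hlt ↦ ?_
  have hax : a < x := hx.1.lt_of_ne (by rintro rfl; linarith)
  have hyb : y < b := hy.2.lt_of_ne (by rintro rfl; linarith)
  have mvt : ∀ u v, a ≤ u → v ≤ b → u < v → ∃ c ∈ Ioo u v, f' c = (f v - f u) / (v - u) :=
    fun u v hau hvb huv ↦ exists_hasDerivAt_eq_slope f f' huv (hf.mono (Icc_subset_Icc hau hvb))
      fun z hz ↦ hderiv z ⟨hau.trans_lt hz.1, hz.2.trans_le hvb⟩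
  obtain ⟨p, hp, hfp⟩ := mvt a x le_rfl hx.2 hax
  obtain ⟨c, hc, hfc⟩ := mvt x y hx.1 hy.2 hlt
  obtain ⟨q, hq, hfq⟩ := mvt y b hy.1 le_rfl hyb
  have hp_neg : f' p < 0 := by
    rw [hfp, hfx]; exact div_neg_of_neg_of_pos (by linarith) (by linarith)
  have hq_neg : f' q < 0 := by
    rw [hfq, hfy]; exact div_neg_of_neg_of_pos (by linarith) (by linarith)
  have hc_zero : f' c = 0 := by rw [hfc, hfx, hfy, sub_self, zero_div]
  have hc_le := hconv.le_max_of_mem_Icc ⟨hp.1, hp.2.trans_le hx.2⟩ ⟨hy.1.trans_lt hq.1, hq.2⟩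
    ⟨(hp.2.trans hc.1).le, (hc.2.trans hq.1).le⟩
  rw [hc_zero] at hc_le
  exact (max_lt hp_neg hq_neg).not_ge hc_le

theorem convexOn_iteratedDerivWithin_one_Ioo {g : ℝ → ℝ} {a b : ℝ}
    (hg : ContDiffOn ℝ 3 g (Icc a b))
    (h3 : ∀ y ∈ Ioo a b, 0 ≤ iteratedDerivWithin 3 g (Icc a b) y) :
    ConvexOn ℝ (Ioo a b) (iteratedDerivWithin 1 g (Icc a b)) := by
  have hderiv (n : ℕ) (hn : n < 3) (z : ℝ) (hz : z ∈ interior (Ioo a b)) :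
      HasDerivAt (iteratedDerivWithin n g (Icc a b))
        (iteratedDerivWithin (n + 1) g (Icc a b) z) z := by
    rw [interior_Ioo] at hz
    exact hasDerivAt_iteratedDerivWithin_Icc hg (by exact_mod_cast hn) hz
  refine convexOn_of_hasDerivWithinAt2_nonneg (convex_Ioo a b)
    (HasDerivAt.continuousOn fun z hz ↦ hderiv 1 (by norm_num) z (by rwa [interior_Ioo]))
    (fun z hz ↦ (hderiv 1 (by norm_num) z hz).hasDerivWithinAt)
    (fun z hz ↦ (hderiv 2 (by norm_num) z hz).hasDerivWithinAt) (by rwa [interior_Ioo])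

theorem stmt_7 (g : ℝ → ℝ)
    (hg : ContDiffOn ℝ 3 g (Set.Icc (0:ℝ) 1))
    (h0 : 0 < g 0) (h1 : g 1 < 0)
    (h3 : ∀ y ∈ Set.Icc (0:ℝ) 1, 0 < iteratedDerivWithin 3 g (Set.Icc (0:ℝ) 1) y) :
    ∃! y : ℝ, y ∈ Set.Icc (0:ℝ) 1 ∧ g y = 0 := by
  have hcont : ContinuousOn g (Icc 0 1) := hg.continuousOn
  obtain ⟨y, hy, hgy⟩ := intermediate_value_Icc' zero_le_one hcont ⟨h1.le, h0.le⟩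
  have hderiv : ∀ z ∈ Ioo (0 : ℝ) 1, HasDerivAt g (iteratedDerivWithin 1 g (Icc 0 1) z) z :=
    fun z hz ↦ by simpa using hasDerivAt_iteratedDerivWithin_Icc hg (n := 0) (by norm_num) hz
  have hconv := convexOn_iteratedDerivWithin_one_Ioo hg fun z hz ↦
    (h3 z (Ioo_subset_Icc_self hz)).le
  exact ⟨y, ⟨hy, hgy⟩, fun z ⟨hz, hgz⟩ ↦
    eq_of_map_eq_zero_of_convexOn_deriv hcont hderiv hconv h0 h1 hz hy hgz hgy⟩
end

section
/- Define g_M(y) = 1 + (ρ(1/2 − (1−δ)θ) − 1 − κ)y − ρ(1/2 − (1−δ)θ)y² + ρ·y·((1−δ)θ(1−y))²·λμ/(β(y+2(1−y)(1−δ))). Then g_M(0) = 1, g_M(1) = −κ, and the third derivative g_M'''(y) = 12(1−δ)³θ²ρλμ/(β(y+2(1−y)(1−δ))⁴) is strictly positive on [0,1]; consequently g_M has a unique root y*_M in (0,1). -/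
/-!
Write `g y = c₀ + c₁ y + c₂ y² + D · y(1-y)²/(ay+b)` with `a = 2δ-1`, `b = 2(1-δ)`,
`D = ρ((1-δ)θ)²λμ/β`. Partial fractions turn the rational term into a quadratic plus
`K (ay+b)⁻¹` with `K = -b(a+b)²/a³`, so the third derivative is `-6Ka³ D (ay+b)⁻⁴ > 0`.
Then `g''` is strictly increasing on `[0,1]`, which together with `g 0 > 0 > g 1` leaves room
for only one zero of `g` in `(0,1)`; the intermediate value theorem provides it.
-/

open Set

section RootUniqueness

variable {f f' f'' f''' : ℝ → ℝ} {a b : ℝ}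

lemma exists_hasDerivAt_eq_slope_of_Icc (hab : a < b)
    (hf : ∀ x ∈ Icc a b, HasDerivAt f (f' x) x) :
    ∃ c ∈ Ioo a b, f' c = (f b - f a) / (b - a) :=
  exists_hasDerivAt_eq_slope f f' hab (fun x hx => (hf x hx).continuousAt.continuousWithinAt)
    fun x hx => hf x (Ioo_subset_Icc_self hx)

lemma exists_hasDerivAt_nonpos_of_le (hab : a < b) (hf : ∀ x ∈ Icc a b, HasDerivAt f (f' x) x)
    (hfab : f b ≤ f a) : ∃ c ∈ Ioo a b, f' c ≤ 0 := by
  obtain ⟨c, hc, hslope⟩ := exists_hasDerivAt_eq_slope_of_Icc hab hf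
  exact ⟨c, hc, hslope ▸ div_nonpos_of_nonpos_of_nonneg (by linarith) (by linarith)⟩

lemma exists_hasDerivAt_nonneg_of_le (hab : a < b) (hf : ∀ x ∈ Icc a b, HasDerivAt f (f' x) x)
    (hfab : f a ≤ f b) : ∃ c ∈ Ioo a b, 0 ≤ f' c := by
  obtain ⟨c, hc, hslope⟩ := exists_hasDerivAt_eq_slope_of_Icc hab hf
  exact ⟨c, hc, hslope ▸ div_nonneg (by linarith) (by linarith)⟩

/-- Two zeros `u < v` together with `f a ≥ 0 ≥ f b` give, by the mean value theorem,
`c₁ < c₂ < c₃` with `f' c₁ ≤ 0 = f' c₂ ≥ f' c₃`, hence `d₁ < d₂` with `f'' d₁ ≥ 0 ≥ f'' d₂`. -/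
theorem subsingleton_zeros_of_strictMonoOn_deriv2
    (hf : ∀ x ∈ Icc a b, HasDerivAt f (f' x) x) (hf' : ∀ x ∈ Icc a b, HasDerivAt f' (f'' x) x)
    (hmono : StrictMonoOn f'' (Icc a b)) (ha : 0 ≤ f a) (hb : f b ≤ 0) :
    {x ∈ Ioo a b | f x = 0}.Subsingleton := by
  suffices key : ∀ u ∈ Ioo a b, ∀ v ∈ Ioo a b, f u = 0 → f v = 0 → ¬u < v by
    rintro u ⟨hu, hfu⟩ v ⟨hv, hfv⟩
    by_contra huv
    rcases lt_or_gt_of_ne huv with h | h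
    exacts [key u hu v hv hfu hfv h, key v hv u hu hfv hfu h]
  intro u hu v hv hfu hfv huv
  have hIcc : ∀ {s t}, a ≤ s → t ≤ b → Icc s t ⊆ Icc a b := fun hs ht => Icc_subset_Icc hs ht
  obtain ⟨c₁, hc₁, hf'c₁⟩ := exists_hasDerivAt_nonpos_of_le hu.1
    (fun x hx => hf x (hIcc le_rfl hu.2.le hx)) (hfu ▸ ha)
  obtain ⟨c₂, hc₂, hf'c₂⟩ := exists_hasDerivAt_eq_slope_of_Icc huv
    (fun x hx => hf x (hIcc hu.1.le hv.2.le hx))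
  rw [hfu, hfv, sub_self, zero_div] at hf'c₂
  obtain ⟨c₃, hc₃, hf'c₃⟩ := exists_hasDerivAt_nonpos_of_le hv.2
    (fun x hx => hf x (hIcc hv.1.le le_rfl hx)) (hfv ▸ hb)
  have hc₁₂ : Icc c₁ c₂ ⊆ Icc a b := hIcc hc₁.1.le (hc₂.2.trans hv.2).le
  have hc₂₃ : Icc c₂ c₃ ⊆ Icc a b := hIcc (hu.1.trans hc₂.1).le hc₃.2.le
  obtain ⟨d₁, hd₁, hf''d₁⟩ := exists_hasDerivAt_nonneg_of_le (hc₁.2.trans hc₂.1)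
    (fun x hx => hf' x (hc₁₂ hx)) (by linarith)
  obtain ⟨d₂, hd₂, hf''d₂⟩ := exists_hasDerivAt_nonpos_of_le (hc₂.2.trans hc₃.1)
    (fun x hx => hf' x (hc₂₃ hx)) (by linarith)
  have := hmono (hc₁₂ (Ioo_subset_Icc_self hd₁)) (hc₂₃ (Ioo_subset_Icc_self hd₂))
    (hd₁.2.trans hd₂.1)
  linarith

theorem existsUnique_zero_of_deriv3_pos (hab : a ≤ b)
    (hf : ∀ x ∈ Icc a b, HasDerivAt f (f' x) x) (hf' : ∀ x ∈ Icc a b, HasDerivAt f' (f'' x) x)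
    (hf'' : ∀ x ∈ Icc a b, HasDerivAt f'' (f''' x) x) (hf''' : ∀ x ∈ Icc a b, 0 < f''' x)
    (ha : 0 < f a) (hb : f b < 0) :
    ∃! x, x ∈ Ioo a b ∧ f x = 0 := by
  have hmono : StrictMonoOn f'' (Icc a b) :=
    strictMonoOn_of_hasDerivWithinAt_pos (convex_Icc a b)
      (fun x hx => (hf'' x hx).continuousAt.continuousWithinAt)
      (fun x hx => (hf'' x (interior_subset hx)).hasDerivWithinAt)
      (fun x hx => hf''' x (interior_subset hx))
  obtain ⟨x, hx, hfx⟩ := intermediate_value_Ioo' hab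
    (fun x hx => (hf x hx).continuousAt.continuousWithinAt) ⟨hb, ha⟩
  exact ⟨x, ⟨hx, hfx⟩, fun y hy =>
    subsingleton_zeros_of_strictMonoOn_deriv2 hf hf' hmono ha.le hb.le hy ⟨hx, hfx⟩⟩

end RootUniqueness

lemma eqOn_iteratedDeriv_succ {f F F' : ℝ → ℝ} {U : Set ℝ} {n : ℕ} (hU : IsOpen U)
    (hn : EqOn (iteratedDeriv n f) F U) (hF : ∀ x ∈ U, HasDerivAt F (F' x) x) :
    EqOn (iteratedDeriv (n + 1) f) F' U := fun x hx => by
  rw [iteratedDeriv_succ, (hn.eventuallyEq_of_mem (hU.mem_nhds hx)).deriv_eq]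
  exact (hF x hx).deriv

noncomputable def quadAddInvPow (c l p k a b : ℝ) (n : ℕ) (y : ℝ) : ℝ :=
  c + l * y + p * y ^ 2 + k * (a * y + b)⁻¹ ^ n

lemma hasDerivAt_inv_affine_pow {a b y : ℝ} (n : ℕ) (hy : a * y + b ≠ 0) :
    HasDerivAt (fun y => (a * y + b)⁻¹ ^ n) (-(n * a) * (a * y + b)⁻¹ ^ (n + 1)) y := by
  have hinv := ((((hasDerivAt_id' y).const_mul a).add_const b).inv hy).pow n
  refine hinv.congr_deriv ?_
  rcases n with _ | m
  · simp
  · simp only [Pi.inv_apply, Nat.add_sub_cancel, Nat.cast_add, Nat.cast_one, mul_one,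
      div_eq_mul_inv, ← inv_pow]
    ring

lemma hasDerivAt_quadAddInvPow {c l p k a b y : ℝ} {n : ℕ} (hy : a * y + b ≠ 0) :
    HasDerivAt (quadAddInvPow c l p k a b n)
      (quadAddInvPow l (2 * p) 0 (-(n * k * a)) a b (n + 1) y) y := by
  have hquad := (((hasDerivAt_id' y).const_mul l).const_add c).add
    ((hasDerivAt_pow 2 y).const_mul p)
  refine (hquad.add ((hasDerivAt_inv_affine_pow n hy).const_mul k)).congr_deriv ?_
  simp only [quadAddInvPow]
  push_cast
  ring

lemma mul_one_sub_sq_div_eq_quadAddInvPow {a b y : ℝ} (ha : a ≠ 0) (hy : a * y + b ≠ 0) :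
    y * (1 - y) ^ 2 / (a * y + b) =
      quadAddInvPow ((a + b) ^ 2 / a ^ 3) (-(2 * a + b) / a ^ 2) a⁻¹ (-(b * (a + b) ^ 2 / a ^ 3))
        a b 1 y := by
  have hy' : y * a + b ≠ 0 := by rwa [mul_comm]
  simp only [quadAddInvPow, pow_one]
  field_simp
  ring

lemma isOpen_affine_ne_zero (a b : ℝ) : IsOpen {y : ℝ | a * y + b ≠ 0} :=
  isOpen_ne_fun (by fun_prop) (by fun_prop)

section RationalModel

variable {c₀ c₁ c₂ D a b : ℝ} {g : ℝ → ℝ}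

lemma eqOn_quadAddInvPow (ha : a ≠ 0)
    (hg : ∀ y, g y = c₀ + c₁ * y + c₂ * y ^ 2 + D * (y * (1 - y) ^ 2 / (a * y + b))) :
    EqOn g (quadAddInvPow (c₀ + D * ((a + b) ^ 2 / a ^ 3)) (c₁ + D * (-(2 * a + b) / a ^ 2))
      (c₂ + D * a⁻¹) (D * -(b * (a + b) ^ 2 / a ^ 3)) a b 1) {y | a * y + b ≠ 0} := by
  intro y hy
  rw [hg, mul_one_sub_sq_div_eq_quadAddInvPow ha hy]
  simp only [quadAddInvPow]
  ring

lemma exists_hasDerivAt_chain (ha : a ≠ 0)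
    (hg : ∀ y, g y = c₀ + c₁ * y + c₂ * y ^ 2 + D * (y * (1 - y) ^ 2 / (a * y + b))) :
    ∃ g₁ g₂ g₃ : ℝ → ℝ, ∀ y, a * y + b ≠ 0 →
      HasDerivAt g (g₁ y) y ∧ HasDerivAt g₁ (g₂ y) y ∧ HasDerivAt g₂ (g₃ y) y ∧
        g₃ y = 6 * D * b * (a + b) ^ 2 / (a * y + b) ^ 4 := by
  have hU := isOpen_affine_ne_zero a b
  refine ⟨_, _, _, fun y hy => ⟨(hasDerivAt_quadAddInvPow hy).congr_of_eventuallyEq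
    ((eqOn_quadAddInvPow ha hg).eventuallyEq_of_mem (hU.mem_nhds hy)),
    hasDerivAt_quadAddInvPow hy, hasDerivAt_quadAddInvPow hy, ?_⟩⟩
  simp only [quadAddInvPow, Nat.reduceAdd, inv_pow]
  push_cast
  field_simp
  ring

lemma iteratedDeriv_three_eq (ha : a ≠ 0)
    (hg : ∀ y, g y = c₀ + c₁ * y + c₂ * y ^ 2 + D * (y * (1 - y) ^ 2 / (a * y + b)))
    {y : ℝ} (hy : a * y + b ≠ 0) :
    iteratedDeriv 3 g y = 6 * D * b * (a + b) ^ 2 / (a * y + b) ^ 4 := by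
  obtain ⟨g₁, g₂, g₃, hchain⟩ := exists_hasDerivAt_chain ha hg
  have hU := isOpen_affine_ne_zero a b
  have h₀ : EqOn (iteratedDeriv 0 g) g {y | a * y + b ≠ 0} := by simp [EqOn]
  have h₃ := eqOn_iteratedDeriv_succ hU (eqOn_iteratedDeriv_succ hU
    (eqOn_iteratedDeriv_succ hU h₀ fun x hx => (hchain x hx).1) fun x hx => (hchain x hx).2.1)
    fun x hx => (hchain x hx).2.2.1
  rw [h₃ hy, (hchain y hy).2.2.2]

lemma existsUnique_zero_mem_Ioo (ha : a ≠ 0) (hb : 0 < b) (hab : 0 < a + b) (hD : 0 < D)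
    (hg : ∀ y, g y = c₀ + c₁ * y + c₂ * y ^ 2 + D * (y * (1 - y) ^ 2 / (a * y + b)))
    (h₀ : 0 < c₀) (h₁ : c₀ + c₁ + c₂ < 0) :
    ∃! y, y ∈ Ioo 0 1 ∧ g y = 0 := by
  obtain ⟨g₁, g₂, g₃, hchain⟩ := exists_hasDerivAt_chain ha hg
  have hpos : ∀ y ∈ Icc (0 : ℝ) 1, 0 < a * y + b := by
    rintro y ⟨hy₀, hy₁⟩
    rcases hy₀.eq_or_lt with rfl | hy₀
    · simpa
    · nlinarith [mul_pos hab hy₀]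
  refine existsUnique_zero_of_deriv3_pos zero_le_one (fun y hy => (hchain y (hpos y hy).ne').1)
    (fun y hy => (hchain y (hpos y hy).ne').2.1) (fun y hy => (hchain y (hpos y hy).ne').2.2.1)
    (fun y hy => ?_) (by simpa [hg]) (by simpa [hg])
  rw [(hchain y (hpos y hy).ne').2.2.2]
  have := hpos y hy
  positivity

end RationalModel

theorem stmt_8 (rho kap lam mu th beta del : ℝ)
    (hrho : 0 < rho) (hkap : 0 < kap) (hlam : 0 < lam) (hmu : 0 < mu)
    (hth : 0 < th) (hbeta : 0 < beta) (hdel : del ∈ Set.Ioo (1/2 : ℝ) 1)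
    (g : ℝ → ℝ)
    (hg : ∀ y, g y = 1 + (rho*(1/2 - (1-del)*th) - 1 - kap)*y
        - rho*(1/2 - (1-del)*th)*y^2
        + rho*y*((1-del)*th*(1-y))^2*lam*mu/(beta*(y+2*(1-y)*(1-del)))) :
    g 0 = 1 ∧ g 1 = -kap ∧
    (∀ y ∈ Set.Icc (0:ℝ) 1,
      iteratedDeriv 3 g y = 12*(1-del)^3*th^2*rho*lam*mu/(beta*(y+2*(1-y)*(1-del))^4) ∧
      0 < 12*(1-del)^3*th^2*rho*lam*mu/(beta*(y+2*(1-y)*(1-del))^4)) ∧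
    ∃! y : ℝ, y ∈ Set.Ioo (0:ℝ) 1 ∧ g y = 0 := by
  obtain ⟨hdel₀, hdel₁⟩ := hdel
  have hden : ∀ y, y + 2 * (1 - y) * (1 - del) = (2 * del - 1) * y + 2 * (1 - del) :=
    fun y => by ring
  have hg' : ∀ y, g y = 1 + (rho * (1/2 - (1 - del) * th) - 1 - kap) * y
      + -(rho * (1/2 - (1 - del) * th)) * y ^ 2
      + rho * ((1 - del) * th) ^ 2 * lam * mu / beta
        * (y * (1 - y) ^ 2 / ((2 * del - 1) * y + 2 * (1 - del))) :=
    fun y => by rw [hg, hden, div_mul_div_comm]; ring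
  have ha : 2 * del - 1 ≠ 0 := by linarith
  have hε : 0 < 1 - del := by linarith
  refine ⟨by simp [hg], by norm_num [hg]; ring, fun y hy => ⟨?_, ?_⟩,
    existsUnique_zero_mem_Ioo ha (by linarith) (by linarith) (by positivity) hg' one_pos
      (by linarith)⟩
  · rw [iteratedDeriv_three_eq ha hg' (by nlinarith [hy.1, hy.2]), hden]
    field_simp
    ring
  · have : 0 < y + 2 * (1 - y) * (1 - del) := by nlinarith [hy.1, hy.2]
    positivity
end

section
/- Define g_I(y) = 1 + (ρ(1/2 − δθ) − 1 − κ)y − ρ(1/2 − δθ)y² + ρ·y·(δθ(1−y))²·(λμ−(1−λ))/(β(y+2(1−y)δ)). If μ > (1−λ)/λ, then g_I(0) = 1, g_I(1) = −κ, and g_I'''(y) = 12δ³θ²ρ(λμ−(1−λ))/(β(y+2(1−y)δ)⁴) > 0 on [0,1]; consequently g_I has a unique root y*_I in (0,1). -/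
/-!
Dividing `x (1 - x) ^ 2` by the affine denominator `D x = x + 2 (1 - x) δ` leaves a constant
remainder `2 δ / (2 δ - 1) ^ 3`, so near every point of `[0, 1]` the function `g` is a quadratic
plus a multiple of `1 / D`, and `g'''` is a multiple of `1 / D ^ 4` with the sign of
`λ μ - (1 - λ)`. Thus `g'` is convex on `[0, 1]`. If `g` had two zeros `u < v` in `(0, 1)`,
then, as `g 0 > 0 > g 1`, the mean value theorem would produce points `c₁ < c₂ < c₃` where `g'`
is negative, zero and negative, which a convex function cannot do. Existence is the
intermediate value theorem.
-/

open Set Filter Topology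

theorem iteratedDeriv_three_quadratic_add_div_affine {a₀ a₁ a₂ K c d y : ℝ}
    (h : c * y + d ≠ 0) :
    iteratedDeriv 3 (fun x => a₀ + a₁ * x + a₂ * x ^ 2 + K / (c * x + d)) y
      = -6 * K * c ^ 3 / (c * y + d) ^ 4 := by
  rw [iteratedDeriv_fun_add (by fun_prop) (by fun_prop (disch := exact h))]
  simp (discharger := fun_prop) only [iteratedDeriv_fun_add, iteratedDeriv_const,
    iteratedDeriv_const_mul_field a₁ (fun x => x), iteratedDeriv_fun_id,
    iteratedDeriv_const_mul_field, iteratedDeriv_pow, div_eq_mul_inv, iteratedDeriv_eq_iterate,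
    iter_deriv_inv_linear]
  norm_num [zpow_neg]
  ring

theorem iteratedDeriv_three_quadratic_add_mul_div {a₀ a₁ a₂ C δ y : ℝ} (hδ : 1 - 2 * δ ≠ 0)
    (hy : y + 2 * (1 - y) * δ ≠ 0) :
    iteratedDeriv 3
        (fun x => a₀ + a₁ * x + a₂ * x ^ 2 + C * x * (1 - x) ^ 2 / (x + 2 * (1 - x) * δ)) y
      = 12 * δ * C / (y + 2 * (1 - y) * δ) ^ 4 := by
  have hD : ∀ x, x + 2 * (1 - x) * δ = (1 - 2 * δ) * x + 2 * δ := fun x => by ring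
  have hdiv : (fun x => a₀ + a₁ * x + a₂ * x ^ 2 + C * x * (1 - x) ^ 2 / (x + 2 * (1 - x) * δ))
      =ᶠ[𝓝 y] fun x => (a₀ + C / (1 - 2 * δ) ^ 3) + (a₁ - C * (2 - 2 * δ) / (1 - 2 * δ) ^ 2) * x
        + (a₂ + C / (1 - 2 * δ)) * x ^ 2
        + -(2 * δ * C / (1 - 2 * δ) ^ 3) / ((1 - 2 * δ) * x + 2 * δ) := by
    have hcont : ContinuousAt (fun x => x + 2 * (1 - x) * δ) y := by fun_prop
    filter_upwards [hcont.eventually_ne hy] with x hx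
    have hrem : C * x * (1 - x) ^ 2 = ((1 - 2 * δ) * x + 2 * δ)
        * (C / (1 - 2 * δ) ^ 3 - C * (2 - 2 * δ) / (1 - 2 * δ) ^ 2 * x + C / (1 - 2 * δ) * x ^ 2)
        - 2 * δ * C / (1 - 2 * δ) ^ 3 := by
      field_simp
      ring
    rw [hD] at hx ⊢
    rw [hrem, sub_div, mul_div_cancel_left₀ _ hx]
    ring
  rw [hdiv.iteratedDeriv_eq, iteratedDeriv_three_quadratic_add_div_affine (by rwa [← hD]), hD]
  field_simp
  ring

theorem convexOn_deriv_of_iteratedDeriv_three_nonneg {f : ℝ → ℝ} {s : Set ℝ} (hs : Convex ℝ s)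
    (hf : ∀ x ∈ s, ContDiffAt ℝ 3 f x) (h3 : ∀ x ∈ s, 0 ≤ iteratedDeriv 3 f x) :
    ConvexOn ℝ s (deriv f) := by
  have hf' : ∀ x ∈ s, ContDiffAt ℝ 2 (deriv f) x := fun x hx => (hf x hx).derivWithin le_rfl
  refine convexOn_of_deriv2_nonneg' hs (fun x hx => ?_) (fun x hx => ?_) fun x hx => ?_
  · exact ((hf' x hx).differentiableAt (by norm_num)).differentiableWithinAt
  · exact (((hf' x hx).derivWithin (m := 1) le_rfl).differentiableAt
      (by norm_num)).differentiableWithinAt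
  · rw [← iteratedDeriv_eq_iterate, ← iteratedDeriv_succ']
    exact h3 x hx

theorem existsUnique_eq_zero_of_convexOn_deriv {f : ℝ → ℝ} {a b : ℝ} (hab : a ≤ b)
    (hf : ∀ x ∈ Icc a b, DifferentiableAt ℝ f x) (hconv : ConvexOn ℝ (Icc a b) (deriv f))
    (ha : 0 < f a) (hb : f b < 0) : ∃! x, x ∈ Ioo a b ∧ f x = 0 := by
  have hcont : ContinuousOn f (Icc a b) := fun x hx => (hf x hx).continuousAt.continuousWithinAt
  have hslope : ∀ ⦃u v⦄, a ≤ u → u < v → v ≤ b →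
      ∃ c ∈ Ioo u v, deriv f c = (f v - f u) / (v - u) := fun u v hau huv hvb =>
    exists_deriv_eq_slope f huv (hcont.mono (Icc_subset_Icc hau hvb))
      fun x hx => (hf x ⟨hau.trans hx.1.le, hx.2.le.trans hvb⟩).differentiableWithinAt
  have hno_two_zeros : ∀ u ∈ Ioo a b, ∀ v ∈ Ioo a b, f u = 0 → f v = 0 → ¬ u < v := by
    rintro u ⟨hau, hub⟩ v ⟨hav, hvb⟩ hfu hfv huv
    obtain ⟨c₁, hc₁, hd₁⟩ := hslope le_rfl hau hub.le
    obtain ⟨c₂, hc₂, hd₂⟩ := hslope hau.le huv hvb.le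
    obtain ⟨c₃, hc₃, hd₃⟩ := hslope hav.le hvb le_rfl
    have h₁ : deriv f c₁ < 0 := by
      rw [hd₁, hfu]; exact div_neg_of_neg_of_pos (by linarith) (by linarith)
    have h₃ : deriv f c₃ < 0 := by
      rw [hd₃, hfv]; exact div_neg_of_neg_of_pos (by linarith) (by linarith)
    have hle : deriv f c₂ ≤ max (deriv f c₁) (deriv f c₃) :=
      hconv.le_on_segment ⟨hc₁.1.le, by linarith [hc₁.2]⟩ ⟨by linarith [hc₃.1], hc₃.2.le⟩
        (by rw [segment_eq_Icc (by linarith [hc₁.2, hc₃.1])]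
            exact ⟨by linarith [hc₁.2, hc₂.1], by linarith [hc₂.2, hc₃.1]⟩)
    rw [hd₂, hfu, hfv, sub_self, zero_div] at hle
    exact (max_lt h₁ h₃).not_ge hle
  obtain ⟨x, hx, hfx⟩ := intermediate_value_Ioo' hab hcont ⟨hb, ha⟩
  refine ⟨x, ⟨hx, hfx⟩, fun y ⟨hy, hfy⟩ => ?_⟩
  exact le_antisymm (not_lt.1 (hno_two_zeros x hx y hy hfx hfy))
    (not_lt.1 (hno_two_zeros y hy x hx hfy hfx))

theorem stmt_9_general (rho kap lam mu th beta del : ℝ)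
    (hrho : 0 < rho) (hkap : 0 < kap) (hlam : lam ∈ Set.Ioo (0:ℝ) 1)
    (hth : 0 < th) (hbeta : 0 < beta) (hdel : del ∈ Set.Ioo (1/2 : ℝ) 1)
    (hweight : mu > (1-lam)/lam)
    (g : ℝ → ℝ)
    (hg : ∀ y, g y = 1 + (rho*(1/2 - del*th) - 1 - kap)*y
        - rho*(1/2 - del*th)*y^2
        + rho*y*(del*th*(1-y))^2*(lam*mu-(1-lam))/(beta*(y+2*(1-y)*del))) :
    g 0 = 1 ∧ g 1 = -kap ∧
    (∀ y ∈ Set.Icc (0:ℝ) 1,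
      iteratedDeriv 3 g y = 12*del^3*th^2*rho*(lam*mu-(1-lam))/(beta*(y+2*(1-y)*del)^4) ∧
      0 < 12*del^3*th^2*rho*(lam*mu-(1-lam))/(beta*(y+2*(1-y)*del)^4)) ∧
    ∃! y : ℝ, y ∈ Set.Ioo (0:ℝ) 1 ∧ g y = 0 := by
  obtain ⟨hdel_half, -⟩ := hdel
  have hM : 0 < lam * mu - (1 - lam) := by
    have := (div_lt_iff₀ hlam.1).1 hweight
    linarith
  have hg' : g = fun x => 1 + (rho * (1/2 - del * th) - 1 - kap) * x
      + -(rho * (1/2 - del * th)) * x ^ 2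
      + rho * del ^ 2 * th ^ 2 * (lam * mu - (1 - lam)) / beta * x * (1 - x) ^ 2
        / (x + 2 * (1 - x) * del) := funext fun x => by rw [hg, ← div_div]; ring
  have hD : ∀ y ∈ Icc (0:ℝ) 1, 0 < y + 2 * (1 - y) * del := fun y hy => by
    nlinarith [hy.1, hy.2]
  have h3 : ∀ y ∈ Icc (0:ℝ) 1, iteratedDeriv 3 g y
      = 12*del^3*th^2*rho*(lam*mu-(1-lam))/(beta*(y+2*(1-y)*del)^4) := fun y hy => by
    rw [hg', iteratedDeriv_three_quadratic_add_mul_div (by linarith) (hD y hy).ne', ← div_div]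
    ring
  have h3pos : ∀ y ∈ Icc (0:ℝ) 1,
      0 < 12*del^3*th^2*rho*(lam*mu-(1-lam))/(beta*(y+2*(1-y)*del)^4) := fun y hy => by
    have := hD y hy
    positivity
  have hsmooth : ∀ y ∈ Icc (0:ℝ) 1, ContDiffAt ℝ 3 g y := fun y hy => by
    rw [hg']
    fun_prop (disch := exact (hD y hy).ne')
  have hg0 : g 0 = 1 := by rw [hg]; norm_num
  have hg1 : g 1 = -kap := by rw [hg]; norm_num; ring
  refine ⟨hg0, hg1, fun y hy => ⟨h3 y hy, h3pos y hy⟩, ?_⟩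
  refine existsUnique_eq_zero_of_convexOn_deriv zero_le_one
    (fun y hy => (hsmooth y hy).differentiableAt (by norm_num))
    (convexOn_deriv_of_iteratedDeriv_three_nonneg (convex_Icc 0 1) hsmooth
      fun y hy => (h3 y hy).symm ▸ (h3pos y hy).le) (by linarith) (by linarith)

theorem stmt_9 (rho kap lam mu th beta del : ℝ)
    (hrho : 0 < rho) (hkap : 0 < kap) (hlam : lam ∈ Set.Ioo (0:ℝ) 1) (hmu : 0 < mu)
    (hth : 0 < th) (hbeta : 0 < beta) (hdel : del ∈ Set.Ioo (1/2 : ℝ) 1)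
    (hweight : mu > (1-lam)/lam)
    (g : ℝ → ℝ)
    (hg : ∀ y, g y = 1 + (rho*(1/2 - del*th) - 1 - kap)*y
        - rho*(1/2 - del*th)*y^2
        + rho*y*(del*th*(1-y))^2*(lam*mu-(1-lam))/(beta*(y+2*(1-y)*del))) :
    g 0 = 1 ∧ g 1 = -kap ∧
    (∀ y ∈ Set.Icc (0:ℝ) 1,
      iteratedDeriv 3 g y = 12*del^3*th^2*rho*(lam*mu-(1-lam))/(beta*(y+2*(1-y)*del)^4) ∧
      0 < 12*del^3*th^2*rho*(lam*mu-(1-lam))/(beta*(y+2*(1-y)*del)^4)) ∧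
    ∃! y : ℝ, y ∈ Set.Ioo (0:ℝ) 1 ∧ g y = 0 :=
  stmt_9_general rho kap lam mu th beta del hrho hkap hlam hth hbeta hdel hweight g hg
end

section
/- Fix y ∈ (0,1) and suppose μ > (1−λ)/λ and λμθ < 2β. Define L(δ) = (1−δ)(1 − λμ(1−y)(1−δ)θ/(β(y+2(1−y)(1−δ)))) and R(δ) = δ(1 − (1−y)δθ(λμ−(1−λ))/(β(y+2(1−y)δ))). Then L(1/2) < R(1/2), L is strictly decreasing and R is strictly increasing on [1/2,1); hence L(δ) < R(δ) for all δ ∈ [1/2,1). -/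
/-!
Both sides have the shape `u - c * u ^ 2 / (y + 2 * (1 - y) * u)`, with `u = 1 - δ`,
`c = λμ(1-y)θ/β` for `L` and `u = δ`, `c = (1-y)θ(λμ-(1-λ))/β` for `R`. Such a map is strictly
increasing in `u > 0` as soon as `c < 2(1-y)`; `λμθ < 2β` gives this for `c_L`, and `c_R < c_L` because `λ < 1`.
At `δ = 1/2` the denominators equal `1`, so `L(1/2) < R(1/2)` also reduces to `c_R < c_L`.
-/

open Set

noncomputable def penalized (y b c u : ℝ) : ℝ := u - c * u ^ 2 / (y + b * u)

lemma strictMonoOn_penalized {y b c : ℝ} (hy : 0 < y) (hb : 0 ≤ b) (hcb : c < b) :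
    StrictMonoOn (penalized y b c) (Ioi 0) := by
  intro u₁ (h₁ : 0 < u₁) u₂ (h₂ : 0 < u₂) h₁₂
  have hD₁ : 0 < y + b * u₁ := by positivity
  have hD₂ : 0 < y + b * u₂ := by positivity
  -- `(y + b u₁)(y + b u₂) - c (y (u₁ + u₂) + b u₁ u₂) = y² + (b - c)(y (u₁ + u₂) + b u₁ u₂)`
  have hpos : 0 < y ^ 2 + (b - c) * (y * (u₁ + u₂) + b * (u₁ * u₂)) := by
    have : 0 < b - c := sub_pos.2 hcb
    positivity
  have key : c * u₂ ^ 2 / (y + b * u₂) - c * u₁ ^ 2 / (y + b * u₁) < u₂ - u₁ := by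
    rw [div_sub_div _ _ hD₂.ne' hD₁.ne', div_lt_iff₀ (mul_pos hD₂ hD₁)]
    nlinarith [mul_pos (sub_pos.2 h₁₂) hpos]
  unfold penalized
  linarith

lemma penalized_half (y c : ℝ) : penalized y (2 * (1 - y)) c (1 / 2) = 1 / 2 - c / 4 := by
  unfold penalized
  ring

theorem stmt_12_general (lam mu th beta y : ℝ)
    (hlam : lam ∈ Set.Ioo (0:ℝ) 1) (hth : 0 < th) (hbeta : 0 < beta)
    (hy : y ∈ Set.Ioo (0:ℝ) 1)
    (hcost : lam*mu*th < 2*beta)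
    (L R : ℝ → ℝ)
    (hL : ∀ d, L d = (1-d)*(1 - lam*mu*(1-y)*(1-d)*th/(beta*(y+2*(1-y)*(1-d)))))
    (hR : ∀ d, R d = d*(1 - (1-y)*d*th*(lam*mu-(1-lam))/(beta*(y+2*(1-y)*d)))) :
    L (1/2) < R (1/2) ∧
    StrictAntiOn L (Set.Ico (1/2 : ℝ) 1) ∧
    StrictMonoOn R (Set.Ico (1/2 : ℝ) 1) ∧
    ∀ d ∈ Set.Ico (1/2 : ℝ) 1, L d < R d := by
  obtain ⟨hy₀, hy₁⟩ := hy
  have hL' : L = fun d ↦ penalized y (2 * (1 - y)) (lam * mu * (1 - y) * th / beta) (1 - d) :=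
    funext fun d ↦ by rw [hL, ← div_div]; unfold penalized; ring
  have hR' : R = penalized y (2 * (1 - y)) ((1 - y) * th * (lam * mu - (1 - lam)) / beta) :=
    funext fun d ↦ by rw [hR, ← div_div]; unfold penalized; ring
  set b := 2 * (1 - y)
  set cL := lam * mu * (1 - y) * th / beta
  set cR := (1 - y) * th * (lam * mu - (1 - lam)) / beta
  have hcRL : cR < cL := by
    rw [div_lt_div_iff_of_pos_right hbeta]
    nlinarith [mul_pos (mul_pos (sub_pos.2 hy₁) hth) (sub_pos.2 hlam.2)]
  have hcLb : cL < b := by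
    rw [div_lt_iff₀ hbeta]
    nlinarith [mul_lt_mul_of_pos_left hcost (sub_pos.2 hy₁)]
  have hb : 0 ≤ b := by linarith
  have hhalf : L (1/2) < R (1/2) := by
    rw [hL', hR']
    show penalized y (2 * (1 - y)) cL (1 - 1 / 2) < penalized y (2 * (1 - y)) cR (1 / 2)
    rw [show (1 : ℝ) - 1 / 2 = 1 / 2 by norm_num, penalized_half, penalized_half]
    linarith
  have hanti : StrictAntiOn L (Ico (1/2) 1) := by
    rw [hL']
    exact (strictMonoOn_penalized hy₀ hb hcLb).comp_strictAntiOn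
      (fun _ _ _ _ h ↦ by linarith) (fun d hd ↦ sub_pos.2 hd.2)
  have hmono : StrictMonoOn R (Ico (1/2) 1) := by
    rw [hR']
    exact (strictMonoOn_penalized hy₀ hb (hcRL.trans hcLb)).mono
      fun d hd ↦ lt_of_lt_of_le (by norm_num) hd.1
  have hmem : (1/2 : ℝ) ∈ Ico (1/2) 1 := by norm_num
  refine ⟨hhalf, hanti, hmono, fun d hd ↦ ?_⟩
  calc L d ≤ L (1/2) := hanti.antitoneOn hmem hd hd.1
    _ < R (1/2) := hhalf
    _ ≤ R d := hmono.monotoneOn hmem hd hd.1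

theorem stmt_12 (lam mu th beta y : ℝ)
    (hlam : lam ∈ Set.Ioo (0:ℝ) 1) (hmu : 0 < mu) (hth : 0 < th) (hbeta : 0 < beta)
    (hy : y ∈ Set.Ioo (0:ℝ) 1)
    (hweight : mu > (1-lam)/lam) (hcost : lam*mu*th < 2*beta)
    (L R : ℝ → ℝ)
    (hL : ∀ d, L d = (1-d)*(1 - lam*mu*(1-y)*(1-d)*th/(beta*(y+2*(1-y)*(1-d)))))
    (hR : ∀ d, R d = d*(1 - (1-y)*d*th*(lam*mu-(1-lam))/(beta*(y+2*(1-y)*d)))) :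
    L (1/2) < R (1/2) ∧
    StrictAntiOn L (Set.Ico (1/2 : ℝ) 1) ∧
    StrictMonoOn R (Set.Ico (1/2 : ℝ) 1) ∧
    ∀ d ∈ Set.Ico (1/2 : ℝ) 1, L d < R d :=
  stmt_12_general lam mu th beta y hlam hth hbeta hy hcost L R hL hR
end

section
/- Let G(y) = g_M(y) as in the model and define f(y) = 2(1−δ)(1−y)λμθ(1−δ(1−y))/(β(y+2(1−y)(1−δ))²) − 1. If λμθ < 2β then f(0) = λμθ/(2β) − 1 < 0 and f'(y) = −2(1−δ)λμθ·y/(β(y+2(1−y)(1−δ))³) < 0 for y ∈ (0,1]; hence f(y) < 0 on [0,1], and consequently ∂g_M/∂δ (y) = −θρy(1−y)f(y) > 0 for y ∈ (0,1), so the unique root y*_M of g_M is increasing in δ. -/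
/-!
Write `L = λμθ` and `D = y + 2(1-y)(1-δ)`. The numerator of `f + 1` is `(L/2)(D² - y²)`, so
`f = L/(2β) - 1 - L y² / (2β D²)`: this gives `f(0)` and `f < 0` on `[0,1]` at once.
Hence `∂g_M/∂δ = -θρy(1-y) f > 0`, so `g_M` increases strictly in `δ`; a root of the
smaller function then cannot lie to the right of a root past which the larger one stays negative.
-/

open Set

lemma root_lt_root_of_lt_of_neg_right {s : Set ℝ} {g₁ g₂ : ℝ → ℝ} {y₁ y₂ : ℝ}
    (hlt : ∀ y ∈ s, g₁ y < g₂ y) (hy₁ : y₁ ∈ s) (h₁ : g₁ y₁ = 0) (h₂ : g₂ y₂ = 0)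
    (hneg : ∀ y ∈ s, y₂ < y → g₂ y < 0) : y₁ < y₂ := by
  by_contra! hle
  have hg₂ : g₂ y₁ ≤ 0 := by
    rcases hle.lt_or_eq with hlt' | rfl
    · exact (hneg y₁ hy₁ hlt').le
    · exact h₂.le
  linarith [hlt y₁ hy₁]

section

variable {rho kap lam mu th beta d y : ℝ}

lemma gM_denom_pos (hd : d < 1) (hy₀ : 0 ≤ y) (hy₁ : y ≤ 1) : 0 < y + 2*(1-y)*(1-d) := by
  rcases hy₀.eq_or_lt with rfl | hy₀
  · linarith
  · nlinarith [mul_nonneg (sub_nonneg.2 hy₁) (sub_pos.2 hd).le]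

lemma fM_eq (hbeta : beta ≠ 0) (hD : y + 2*(1-y)*(1-d) ≠ 0) :
    2*(1-d)*(1-y)*lam*mu*th*(1-d*(1-y))/(beta*(y+2*(1-y)*(1-d))^2) - 1
      = lam*mu*th/(2*beta) - 1 - lam*mu*th*y^2/(2*beta*(y+2*(1-y)*(1-d))^2) := by
  rw [show 2*(1-d)*(1-y)*lam*mu*th*(1-d*(1-y)) = lam*mu*th*((y+2*(1-y)*(1-d))^2 - y^2)/2 by ring]
  generalize y + 2*(1-y)*(1-d) = D at hD ⊢
  field_simp
  ring

lemma fM_neg (hL : 0 ≤ lam*mu*th) (hcost : lam*mu*th < 2*beta) (hd : d < 1) (hy₀ : 0 ≤ y)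
    (hy₁ : y ≤ 1) :
    2*(1-d)*(1-y)*lam*mu*th*(1-d*(1-y))/(beta*(y+2*(1-y)*(1-d))^2) - 1 < 0 := by
  have hbeta : 0 < beta := by linarith
  have hD := gM_denom_pos hd hy₀ hy₁
  rw [fM_eq hbeta.ne' hD.ne']
  have hfrac : lam*mu*th/(2*beta) < 1 := (div_lt_one (by positivity)).2 hcost
  have hsq : 0 ≤ lam*mu*th*y^2/(2*beta*(y+2*(1-y)*(1-d))^2) := by positivity
  linarith

lemma hasDerivAt_fM (hbeta : beta ≠ 0) (hD : y + 2*(1-y)*(1-d) ≠ 0) :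
    HasDerivAt
      (fun y => 2*(1-d)*(1-y)*lam*mu*th*(1-d*(1-y))/(beta*(y+2*(1-y)*(1-d))^2) - 1)
      (-(2*(1-d)*lam*mu*th*y)/(beta*(y+2*(1-y)*(1-d))^3)) y := by
  have hu : HasDerivAt (fun y : ℝ => 1 - y) (-1) y := (hasDerivAt_id' y).const_sub 1
  have hN := ((((hu.const_mul (2*(1-d))).mul_const lam).mul_const mu).mul_const th).fun_mul
    ((hu.const_mul d).const_sub 1)
  have hDen :=
    (((hasDerivAt_id' y).fun_add ((hu.const_mul 2).mul_const (1-d))).fun_pow 2).const_mul beta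
  refine ((hN.div hDen (mul_ne_zero hbeta (pow_ne_zero 2 hD))).sub_const 1).congr_deriv ?_
  generalize hDdef : y + 2*(1-y)*(1-d) = D at hD ⊢
  field_simp
  rw [← hDdef]
  ring

lemma hasDerivAt_gM (hbeta : beta ≠ 0) (hD : y + 2*(1-y)*(1-d) ≠ 0) :
    HasDerivAt
      (fun d => 1 + (rho*(1/2 - (1-d)*th) - 1 - kap)*y - rho*(1/2 - (1-d)*th)*y^2
        + rho*y*((1-d)*th*(1-y))^2*lam*mu/(beta*(y+2*(1-y)*(1-d))))
      (-th*rho*y*(1-y)*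
        (2*(1-d)*(1-y)*lam*mu*th*(1-d*(1-y))/(beta*(y+2*(1-y)*(1-d))^2) - 1)) d := by
  have ha : HasDerivAt (fun d : ℝ => 1 - d) (-1) d := (hasDerivAt_id' d).const_sub 1
  have hin := ((ha.mul_const th).const_sub (1/2)).const_mul rho
  have hNum :=
    (((((ha.mul_const th).mul_const (1-y)).fun_pow 2).const_mul (rho*y)).mul_const lam).mul_const mu
  have hDen := ((ha.const_mul (2*(1-y))).const_add y).const_mul beta
  refine (((((hin.sub_const 1).sub_const kap).mul_const y).const_add 1).fun_sub
    (hin.mul_const (y^2)) |>.fun_add (hNum.div hDen (mul_ne_zero hbeta hD))).congr_deriv ?_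
  generalize hDdef : y + 2*(1-y)*(1-d) = D at hD ⊢
  field_simp
  rw [← hDdef]
  ring

end

theorem stmt_17_general (rho kap lam mu th beta : ℝ)
    (hrho : 0 < rho) (hlam : lam ∈ Set.Ioo (0:ℝ) 1) (hmu : 0 < mu)
    (hth : 0 < th) (hcost : lam*mu*th < 2*beta)
    (f gM : ℝ → ℝ → ℝ)
    (hf : ∀ d y, f d y = 2*(1-d)*(1-y)*lam*mu*th*(1-d*(1-y))/(beta*(y+2*(1-y)*(1-d))^2) - 1)
    (hgM : ∀ d y, gM d y = 1 + (rho*(1/2 - (1-d)*th) - 1 - kap)*y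
        - rho*(1/2 - (1-d)*th)*y^2
        + rho*y*((1-d)*th*(1-y))^2*lam*mu/(beta*(y+2*(1-y)*(1-d)))) :
    (∀ d ∈ Set.Ioo (1/2 : ℝ) 1,
      f d 0 = lam*mu*th/(2*beta) - 1 ∧ f d 0 < 0 ∧
      (∀ y ∈ Set.Ioc (0:ℝ) 1,
        HasDerivAt (fun y' => f d y') (-(2*(1-d)*lam*mu*th*y)/(beta*(y+2*(1-y)*(1-d))^3)) y ∧
        -(2*(1-d)*lam*mu*th*y)/(beta*(y+2*(1-y)*(1-d))^3) < 0) ∧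
      (∀ y ∈ Set.Icc (0:ℝ) 1, f d y < 0) ∧
      (∀ y ∈ Set.Ioo (0:ℝ) 1,
        HasDerivAt (fun d' => gM d' y) (-th*rho*y*(1-y)*f d y) d ∧
        0 < -th*rho*y*(1-y)*f d y)) ∧
    (∀ d1 ∈ Set.Ioo (1/2 : ℝ) 1, ∀ d2 ∈ Set.Ioo (1/2 : ℝ) 1, d1 < d2 →
      ∀ y1 ∈ Set.Ioo (0:ℝ) 1, ∀ y2 ∈ Set.Ioo (0:ℝ) 1,
        gM d1 y1 = 0 → gM d2 y2 = 0 →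
        (∀ y ∈ Set.Ioo (0:ℝ) 1, y1 < y → gM d1 y < 0) →
        (∀ y ∈ Set.Ioo (0:ℝ) 1, y2 < y → gM d2 y < 0) →
        y1 < y2) := by
  have hL : 0 < lam*mu*th := by have := hlam.1; positivity
  have hbeta : 0 < beta := by linarith
  have hD : ∀ d < (1:ℝ), ∀ y ∈ Icc (0:ℝ) 1, 0 < y + 2*(1-y)*(1-d) :=
    fun d hd y hy => gM_denom_pos hd hy.1 hy.2
  have hf_neg : ∀ d < (1:ℝ), ∀ y ∈ Icc (0:ℝ) 1, f d y < 0 := fun d hd y hy => by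
    rw [hf]; exact fM_neg hL.le hcost hd hy.1 hy.2
  have hgM_deriv : ∀ d < (1:ℝ), ∀ y ∈ Ioo (0:ℝ) 1,
      HasDerivAt (fun d' => gM d' y) (-th*rho*y*(1-y)*f d y) d ∧ 0 < -th*rho*y*(1-y)*f d y :=
    fun d hd y hy => by
      have hy' : y ∈ Icc (0:ℝ) 1 := Ioo_subset_Icc_self hy
      refine ⟨?_, ?_⟩
      · simp only [hgM, hf]
        exact hasDerivAt_gM hbeta.ne' (hD d hd y hy').ne'
      · have : 0 < th*rho*y*(1-y) := by have := hy.1; have := sub_pos.2 hy.2; positivity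
        nlinarith [hf_neg d hd y hy']
  have hmono : ∀ y ∈ Ioo (0:ℝ) 1, StrictMonoOn (fun d => gM d y) (Ioo (1/2) 1) := fun y hy =>
    strictMonoOn_of_hasDerivWithinAt_pos (convex_Ioo _ _)
      (fun d hd => (hgM_deriv d hd.2 y hy).1.continuousAt.continuousWithinAt)
      (fun d hd => ((hgM_deriv d (interior_subset hd).2 y hy).1).hasDerivWithinAt)
      (fun d hd => (hgM_deriv d (interior_subset hd).2 y hy).2)
  refine ⟨fun d hd => ⟨?_, hf_neg d hd.2 0 (left_mem_Icc.2 zero_le_one), fun y hy => ⟨?_, ?_⟩,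
    hf_neg d hd.2, fun y hy => hgM_deriv d hd.2 y hy⟩,
    fun d₁ hd₁ d₂ hd₂ hlt y₁ hy₁ y₂ _ h₁ h₂ _ hneg₂ =>
      root_lt_root_of_lt_of_neg_right (fun y hy => hmono y hy hd₁ hd₂ hlt) hy₁ h₁ h₂ hneg₂⟩
  · rw [hf, fM_eq hbeta.ne' (hD d hd.2 0 (left_mem_Icc.2 zero_le_one)).ne']
    simp
  · simp only [hf]
    exact hasDerivAt_fM hbeta.ne' (hD d hd.2 y (Ioc_subset_Icc_self hy)).ne'
  · have hnum := mul_pos (mul_pos (sub_pos.2 hd.2) hL) hy.1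
    have := hD d hd.2 y (Ioc_subset_Icc_self hy)
    exact div_neg_of_neg_of_pos (by linarith) (by positivity)

theorem stmt_17 (rho kap lam mu th beta : ℝ)
    (hrho : 0 < rho) (hkap : 0 < kap) (hlam : lam ∈ Set.Ioo (0:ℝ) 1) (hmu : 0 < mu)
    (hth : 0 < th) (hbeta : 0 < beta) (hcost : lam*mu*th < 2*beta)
    (f gM : ℝ → ℝ → ℝ)
    (hf : ∀ d y, f d y = 2*(1-d)*(1-y)*lam*mu*th*(1-d*(1-y))/(beta*(y+2*(1-y)*(1-d))^2) - 1)
    (hgM : ∀ d y, gM d y = 1 + (rho*(1/2 - (1-d)*th) - 1 - kap)*y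
        - rho*(1/2 - (1-d)*th)*y^2
        + rho*y*((1-d)*th*(1-y))^2*lam*mu/(beta*(y+2*(1-y)*(1-d)))) :
    (∀ d ∈ Set.Ioo (1/2 : ℝ) 1,
      f d 0 = lam*mu*th/(2*beta) - 1 ∧ f d 0 < 0 ∧
      (∀ y ∈ Set.Ioc (0:ℝ) 1,
        HasDerivAt (fun y' => f d y') (-(2*(1-d)*lam*mu*th*y)/(beta*(y+2*(1-y)*(1-d))^3)) y ∧
        -(2*(1-d)*lam*mu*th*y)/(beta*(y+2*(1-y)*(1-d))^3) < 0) ∧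
      (∀ y ∈ Set.Icc (0:ℝ) 1, f d y < 0) ∧
      (∀ y ∈ Set.Ioo (0:ℝ) 1,
        HasDerivAt (fun d' => gM d' y) (-th*rho*y*(1-y)*f d y) d ∧
        0 < -th*rho*y*(1-y)*f d y)) ∧
    (∀ d1 ∈ Set.Ioo (1/2 : ℝ) 1, ∀ d2 ∈ Set.Ioo (1/2 : ℝ) 1, d1 < d2 →
      ∀ y1 ∈ Set.Ioo (0:ℝ) 1, ∀ y2 ∈ Set.Ioo (0:ℝ) 1,
        gM d1 y1 = 0 → gM d2 y2 = 0 →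
        (∀ y ∈ Set.Ioo (0:ℝ) 1, y1 < y → gM d1 y < 0) →
        (∀ y ∈ Set.Ioo (0:ℝ) 1, y2 < y → gM d2 y < 0) →
        y1 < y2) :=
  stmt_17_general rho kap lam mu th beta hrho hlam hmu hth hcost f gM hf hgM
end

section
/- The threshold ŷ_M, defined as the unique zero in (0,1) of V(y,M) = λ(y−2μ(1−y)(1−δ)θ)/(y+2(1−y)(1−δ)) + (1/β)(λμ(1−y)(1−δ)θ/(y+2(1−y)(1−δ)))², is strictly increasing in β: the partial derivative of V(y,M) with respect to β equals −(1/β²)(λμθ(1−y)(1−δ)/(y+2(1−y)(1−δ)))² < 0 for y ∈ [0,1), while V is strictly increasing in y, so by the implicit function theorem ∂ŷ_M/∂β > 0. -/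
/-!
Writing `w(y) = 2(1-δ)(1-y) / (y + 2(1-y)(1-δ))`, which decreases strictly from `1` to `0` on
`[0,1]`, the function is a quadratic in `w`:
`V(β, y) = λ - λ(1+μθ) w + (λμθ/2)²/β · w²`.
The cost bound `μθ < 2β` puts the vertex of this parabola beyond `w = 1`, so `V(β, ·)` is strictly
increasing in `y`. Since `V` is strictly decreasing in `β` at every `y < 1`, a zero `y₁` of `V(β, ·)`
gives `V(β₂, y₁) < 0 = V(β₂, y₂)` for `β < β₂`, hence `y₁ < y₂`.
-/

open Set

namespace Threshold

variable {lam mu th c b y : ℝ}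

noncomputable def weight (c y : ℝ) : ℝ := 2*c*(1-y)/(y+2*(1-y)*c)

noncomputable def V (lam mu th c b y : ℝ) : ℝ :=
  lam*(y - 2*mu*(1-y)*c*th)/(y+2*(1-y)*c) + 1/b * (lam*mu*th*(1-y)*c/(y+2*(1-y)*c))^2

lemma denom_pos (hc : 0 < c) (hy : y ∈ Icc (0:ℝ) 1) : 0 < y + 2*(1-y)*c := by
  rcases hy.1.eq_or_lt with rfl | hy0
  · linarith
  · nlinarith [mul_nonneg (sub_nonneg.2 hy.2) hc.le]

lemma weight_mem_Icc (hc : 0 < c) (hy : y ∈ Icc (0:ℝ) 1) : weight c y ∈ Icc (0:ℝ) 1 := by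
  have hD := denom_pos hc hy
  refine ⟨div_nonneg ?_ hD.le, (div_le_one hD).2 ?_⟩ <;> nlinarith [hy.1, hy.2]

lemma strictAntiOn_weight (hc : 0 < c) : StrictAntiOn (weight c) (Icc (0:ℝ) 1) := by
  intro y₁ hy₁ y₂ hy₂ hlt
  rw [weight, weight, div_lt_div_iff₀ (denom_pos hc hy₂) (denom_pos hc hy₁)]
  nlinarith

lemma strictAntiOn_quadratic {p k : ℝ} (a : ℝ) (hk : 0 ≤ k) (hkp : 2*k < p) :
    StrictAntiOn (fun s => a - p*s + k*s^2) (Icc (0:ℝ) 1) := by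
  intro s₁ hs₁ s₂ hs₂ hlt
  have hfactor : 0 < p - k*(s₁ + s₂) := by nlinarith [hs₁.2, hs₂.2]
  nlinarith [mul_pos (sub_pos.2 hlt) hfactor]

lemma V_eq_quadratic (hc : 0 < c) (hy : y ∈ Icc (0:ℝ) 1) :
    V lam mu th c b y =
      lam - lam*(1+mu*th)*weight c y + (lam*mu*th/2)^2/b * (weight c y)^2 := by
  have hD := denom_pos hc hy
  unfold V weight
  field_simp
  ring

lemma strictMonoOn_V (hlam : 0 < lam) (hlam1 : lam ≤ 1) (hmu : 0 < mu) (hth : 0 < th)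
    (hc : 0 < c) (hcost : mu*th < 2*b) :
    StrictMonoOn (V lam mu th c b) (Icc (0:ℝ) 1) := by
  have hmth : 0 < mu*th := mul_pos hmu hth
  have hb : 0 < b := by linarith
  have hvertex : 2*((lam*mu*th/2)^2/b) < lam*(1+mu*th) := by
    rw [← mul_div_assoc, div_lt_iff₀ hb]
    nlinarith [mul_pos hlam hmth, mul_pos (mul_pos hlam hmth) hmth]
  refine ((strictAntiOn_quadratic lam (by positivity) hvertex).comp (strictAntiOn_weight hc)
    fun y hy => weight_mem_Icc hc hy).congr fun y hy => ?_
  exact (V_eq_quadratic hc hy).symm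

lemma coeff_pos (hlam : 0 < lam) (hmu : 0 < mu) (hth : 0 < th) (hc : 0 < c)
    (hy : y ∈ Ico (0:ℝ) 1) : 0 < lam*mu*th*(1-y)*c/(y+2*(1-y)*c) := by
  have h1y : 0 < 1 - y := sub_pos.2 hy.2
  exact div_pos (by positivity) (denom_pos hc (Ico_subset_Icc_self hy))

lemma hasDerivAt_V (hb : b ≠ 0) :
    HasDerivAt (fun b => V lam mu th c b y)
      (-(1/b^2) * (lam*mu*th*(1-y)*c/(y+2*(1-y)*c))^2) b := by
  have := ((hasDerivAt_inv hb).mul_const ((lam*mu*th*(1-y)*c/(y+2*(1-y)*c))^2)).const_add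
    (lam*(y - 2*mu*(1-y)*c*th)/(y+2*(1-y)*c))
  simpa only [V, one_div] using this

lemma V_lt_V_of_lt {b₁ b₂ : ℝ} (hlam : 0 < lam) (hmu : 0 < mu) (hth : 0 < th) (hc : 0 < c)
    (hb₁ : 0 < b₁) (hb : b₁ < b₂) (hy : y ∈ Ico (0:ℝ) 1) :
    V lam mu th c b₂ y < V lam mu th c b₁ y := by
  have := coeff_pos hlam hmu hth hc hy
  unfold V
  gcongr

end Threshold

theorem stmt_18_general (lam mu th beta del : ℝ)
    (hlam : lam ∈ Set.Ioo (0:ℝ) 1) (hmu : 0 < mu) (hth : 0 < th) (hbeta : 0 < beta)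
    (hdel : del ∈ Set.Ioo (1/2 : ℝ) 1)
    (hcost : mu*th < 2*beta)
    (V : ℝ → ℝ → ℝ)
    (hV : ∀ b y, V b y = lam*(y - 2*mu*(1-y)*(1-del)*th)/(y+2*(1-y)*(1-del))
        + (1/b)*(lam*mu*(1-y)*(1-del)*th/(y+2*(1-y)*(1-del)))^2) :
    (∀ y ∈ Set.Ico (0:ℝ) 1,
      HasDerivAt (fun b => V b y)
        (-(1/beta^2)*(lam*mu*th*(1-y)*(1-del)/(y+2*(1-y)*(1-del)))^2) beta ∧
      -(1/beta^2)*(lam*mu*th*(1-y)*(1-del)/(y+2*(1-y)*(1-del)))^2 < 0) ∧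
    StrictMonoOn (V beta) (Set.Icc (0:ℝ) 1) ∧
    (∀ beta2 : ℝ, beta < beta2 →
      ∀ y1 ∈ Set.Ioo (0:ℝ) 1, ∀ y2 ∈ Set.Ioo (0:ℝ) 1,
        V beta y1 = 0 → V beta2 y2 = 0 → y1 < y2) := by
  obtain rfl : V = Threshold.V lam mu th (1-del) := by
    funext b y
    rw [hV, Threshold.V]
    ring
  have hc : 0 < 1 - del := sub_pos.2 hdel.2
  have hmono : ∀ b, beta ≤ b → StrictMonoOn (Threshold.V lam mu th (1-del) b) (Icc 0 1) :=
    fun b hb => Threshold.strictMonoOn_V hlam.1 hlam.2.le hmu hth hc (by linarith)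
  refine ⟨fun y hy => ⟨Threshold.hasDerivAt_V hbeta.ne', ?_⟩, hmono beta le_rfl, ?_⟩
  · exact mul_neg_of_neg_of_pos (neg_neg_of_pos (by positivity))
      (pow_pos (Threshold.coeff_pos hlam.1 hmu hth hc hy) 2)
  · intro beta2 hbeta2 y1 hy1 y2 hy2 hzero1 hzero2
    refine ((hmono beta2 hbeta2.le).lt_iff_lt (Ioo_subset_Icc_self hy1)
      (Ioo_subset_Icc_self hy2)).1 ?_
    rw [hzero2, ← hzero1]
    exact Threshold.V_lt_V_of_lt hlam.1 hmu hth hc hbeta hbeta2 (Ioo_subset_Ico_self hy1)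

theorem stmt_18 (lam mu th beta del : ℝ)
    (hlam : lam ∈ Set.Ioo (0:ℝ) 1) (hmu : 0 < mu) (hth : 0 < th) (hbeta : 0 < beta)
    (hdel : del ∈ Set.Ioo (1/2 : ℝ) 1)
    (hcost : mu*th < 2*beta) (hweight : mu > (1-lam)/lam)
    (V : ℝ → ℝ → ℝ)
    (hV : ∀ b y, V b y = lam*(y - 2*mu*(1-y)*(1-del)*th)/(y+2*(1-y)*(1-del))
        + (1/b)*(lam*mu*(1-y)*(1-del)*th/(y+2*(1-y)*(1-del)))^2) :
    (∀ y ∈ Set.Ico (0:ℝ) 1,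
      HasDerivAt (fun b => V b y)
        (-(1/beta^2)*(lam*mu*th*(1-y)*(1-del)/(y+2*(1-y)*(1-del)))^2) beta ∧
      -(1/beta^2)*(lam*mu*th*(1-y)*(1-del)/(y+2*(1-y)*(1-del)))^2 < 0) ∧
    StrictMonoOn (V beta) (Set.Icc (0:ℝ) 1) ∧
    (∀ beta2 : ℝ, beta < beta2 →
      ∀ y1 ∈ Set.Ioo (0:ℝ) 1, ∀ y2 ∈ Set.Ioo (0:ℝ) 1,
        V beta y1 = 0 → V beta2 y2 = 0 → y1 < y2) :=
  stmt_18_general lam mu th beta del hlam hmu hth hbeta hdel hcost V hV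
end
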